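/- Let f : ℝ^n × ℝ^m → ℝ be three times continuously differentiable and satisfy Assumption B, and let z* be a local saddle point of f. Then there exists s* > 0 such that for all s ∈ (0, s*), z* is a locally exponentially stable fixed point of the Damped Newton iteration z_{k+1} = z_k − s (∇F(z_k))^{-1} F(z_k). -/

import Mathlib

open Matrix MeasureTheory Filter

noncomputable section

abbrev Idx (n m : ℕ) := Fin n ⊕ Fin m
abbrev Emm (n m : ℕ) := EuclideanSpace ℝ (Idx n m)

def toE {n m : ℕ} (v : Idx n m → ℝ) : Emm n m := WithLp.toLp 2 v
def ofE {n m : ℕ} (v : Emm n m) : Idx n m → ℝ := v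

def splice {n m : ℕ} (a b : Emm n m) : Emm n m :=
  toE (Sum.elim (fun i => a (Sum.inl i)) (fun j => b (Sum.inr j)))

def IsLocalSaddle {n m : ℕ} (f : Emm n m → ℝ) (zs : Emm n m) : Prop :=
  ∃ U ∈ nhds zs, ∀ w ∈ U, f (splice zs w) ≤ f zs ∧ f zs ≤ f (splice w zs)

def Fvec {n m : ℕ} (f : Emm n m → ℝ) (z : Emm n m) : Emm n m :=
  toE (Sum.elim (fun i => gradient f z (Sum.inl i)) (fun j => -(gradient f z (Sum.inr j))))

def hessMat {n m : ℕ} (f : Emm n m → ℝ) (z : Emm n m) : Matrix (Idx n m) (Idx n m) ℝ :=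
  Matrix.of fun i j => fderiv ℝ (fun w => gradient f w i) z (EuclideanSpace.single j 1)

def Hmat {n m : ℕ} (f : Emm n m → ℝ) (z : Emm n m) : Matrix (Idx n m) (Idx n m) ℝ :=
  diagonal (Sum.elim (fun _ => (-1 : ℝ)) (fun _ => 1)) * hessMat f z

def Lam (n m : ℕ) (τ : ℝ) : Matrix (Idx n m) (Idx n m) ℝ :=
  diagonal (Sum.elim (fun _ => 1 / τ) (fun _ => (1 : ℝ)))

def DFmat {n m : ℕ} (f : Emm n m → ℝ) (z : Emm n m) : Matrix (Idx n m) (Idx n m) ℝ :=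
  Matrix.of fun i j => fderiv ℝ (fun w => Fvec f w i) z (EuclideanSpace.single j 1)

def D2Fmat {n m : ℕ} (f : Emm n m → ℝ) (z v : Emm n m) : Matrix (Idx n m) (Idx n m) ℝ :=
  Matrix.of fun i j => fderiv ℝ (fun w => DFmat f w i j) z v

def IsEigen {n m : ℕ} (A : Matrix (Idx n m) (Idx n m) ℝ) (κ : ℂ) : Prop :=
  ∃ v : Idx n m → ℂ, v ≠ 0 ∧ A.map (fun x : ℝ => (x : ℂ)) *ᵥ v = κ • v

def AssumptionA {n m : ℕ} (f : Emm n m → ℝ) (L : ℝ) : Prop :=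
  (∀ zs, IsLocalSaddle f zs → IsUnit (hessMat f zs)) ∧
    LipschitzWith L.toNNReal (fun z => gradient f z)

def AssumptionB {n m : ℕ} (f : Emm n m → ℝ) (L : ℝ) : Prop :=
  (∀ z, IsUnit (hessMat f z)) ∧ LipschitzWith L.toNNReal (fun z => gradient f z)

def IsSolOn {n m : ℕ} (W : Emm n m → Emm n m) (Z : ℝ → Emm n m) : Prop :=
  ∀ t ∈ Set.Ici (0 : ℝ), HasDerivWithinAt Z (W (Z t)) (Set.Ici 0) t

def IsLocExpStableEquilib {n m : ℕ} (W : Emm n m → Emm n m) (ze : Emm n m) : Prop :=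
  W ze = 0 ∧ ∃ δ M lam : ℝ, 0 < δ ∧ 0 < M ∧ 0 < lam ∧
    ∀ Z : ℝ → Emm n m, IsSolOn W Z → ‖Z 0 - ze‖ < δ →
      ∀ t ≥ (0:ℝ), ‖Z t - ze‖ ≤ M * Real.exp (-lam * t) * ‖Z 0 - ze‖

def IsLocExpStableFixed {n m : ℕ} (w : Emm n m → Emm n m) (ze : Emm n m) : Prop :=
  w ze = ze ∧ ∃ δ M γ : ℝ, 0 < δ ∧ 0 < M ∧ 0 < γ ∧ γ < 1 ∧
    ∀ z0 : Emm n m, ‖z0 - ze‖ < δ → ∀ k : ℕ, ‖w^[k] z0 - ze‖ ≤ M * γ ^ k * ‖z0 - ze‖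

def StableFixed {n m : ℕ} (w : Emm n m → Emm n m) (ze : Emm n m) : Prop :=
  ∀ ε > 0, ∃ δ > 0, ∀ z0 : Emm n m, ‖z0 - ze‖ < δ → ∀ k : ℕ, ‖w^[k] z0 - ze‖ < ε

def UnstableFixed {n m : ℕ} (w : Emm n m → Emm n m) (ze : Emm n m) : Prop :=
  w ze = ze ∧ ¬ StableFixed w ze

def ConvergesToUnstable {n m : ℕ} (w : Emm n m → Emm n m) (z0 : Emm n m) : Prop :=
  ∃ ze : Emm n m, UnstableFixed w ze ∧ Tendsto (fun k => w^[k] z0) atTop (nhds ze)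

/-!
A saddle point is a critical point of `f`, so `zs` is a zero of `F`. At a zero `x` of `F` with
invertible Jacobian, the Newton direction `z ↦ DF(z)⁻¹ F(z)` has derivative the identity: in the
product rule the term carrying the derivative of `DF(z)⁻¹` is applied to `F(x) = 0`. Hence the
damped Newton map `z ↦ z - s DF(z)⁻¹ F(z)` has strict derivative `(1 - s) • id` at `zs`, of norm
`|1 - s| < 1` for `0 < s < 2`, and a map whose strict derivative at a fixed point has norm `< γ ≤ 1`
is `γ`-Lipschitz on a ball around it, so its iterates converge there at rate `γ`.
-/

open scoped NNReal Ring

theorem MulEquiv.map_ringInverse {M N : Type*} [MonoidWithZero M] [MonoidWithZero N]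
    {F : Type*} [EquivLike F M N] [MulEquivClass F M N] (e : F) (a : M) :
    e a⁻¹ʳ = (e a)⁻¹ʳ := by
  by_cases h : IsUnit a
  · obtain ⟨u, rfl⟩ := h
    rw [Ring.inverse_unit]
    exact (Ring.inverse_unit (Units.map (e : M →* N) u)).symm
  · rw [Ring.inverse_non_unit _ h, Ring.inverse_non_unit _ (by simpa using h), map_zero]

theorem contDiff_gradient {F : Type*} [NormedAddCommGroup F] [InnerProductSpace ℝ F]
    [CompleteSpace F] {f : F → ℝ} {k : WithTop ℕ∞} (hf : ContDiff ℝ (k + 1) f) :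
    ContDiff ℝ k (gradient f) :=
  (InnerProductSpace.toDual ℝ F).symm.contDiff.comp (hf.fderiv_right le_rfl)

section DampedNewton

variable {E : Type*} [NormedAddCommGroup E] [NormedSpace ℝ E]

theorem HasStrictFDerivAt.exists_iterate_norm_sub_le {w : E → E} {A : E →L[ℝ] E} {x : E}
    (hw : HasStrictFDerivAt w A x) (hx : w x = x) {γ : ℝ≥0} (hA : ‖A‖₊ < γ) (hγ : γ ≤ 1) :
    ∃ δ > 0, ∀ z, ‖z - x‖ < δ → ∀ k : ℕ, ‖w^[k] z - x‖ ≤ γ ^ k * ‖z - x‖ := by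
  obtain ⟨t, ht, hlip⟩ := hw.exists_lipschitzOnWith_of_nnnorm_lt γ hA
  obtain ⟨δ, hδ, hball⟩ := Metric.mem_nhds_iff.1 ht
  refine ⟨δ, hδ, fun z hz k => ?_⟩
  induction k with
  | zero => simp
  | succ k ih =>
    have hk : w^[k] z ∈ Metric.ball x δ := by
      rw [Metric.mem_ball, dist_eq_norm]
      calc ‖w^[k] z - x‖ ≤ γ ^ k * ‖z - x‖ := ih
        _ ≤ ‖z - x‖ := mul_le_of_le_one_left (norm_nonneg _) (pow_le_one₀ γ.2 hγ)
        _ < δ := hz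
    calc ‖w^[k + 1] z - x‖ = dist (w (w^[k] z)) (w x) := by
          rw [Function.iterate_succ_apply', hx, dist_eq_norm]
      _ ≤ γ * dist (w^[k] z) x := hlip.dist_le_mul _ (hball hk) _ (hball (Metric.mem_ball_self hδ))
      _ ≤ γ * (γ ^ k * ‖z - x‖) := by rw [dist_eq_norm]; gcongr
      _ = γ ^ (k + 1) * ‖z - x‖ := by ring

variable [CompleteSpace E]

def newtonDir (F : E → E) (z : E) : E := (fderiv ℝ F z)⁻¹ʳ (F z)

theorem hasStrictFDerivAt_newtonDir {F : E → E} {x : E} (hF : ContDiffAt ℝ 2 F x)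
    (hx : F x = 0) (hDF : IsUnit (fderiv ℝ F x)) :
    HasStrictFDerivAt (newtonDir F) (ContinuousLinearMap.id ℝ E) x := by
  obtain ⟨u, hu⟩ := hDF
  have hinv : ContDiffAt ℝ 1 (fun z => (fderiv ℝ F z)⁻¹ʳ) x :=
    (hu ▸ contDiffAt_ringInverse ℝ u).comp x (hF.fderiv_right le_rfl)
  have hdir : ContDiffAt ℝ 1 (newtonDir F) x := hinv.clm_apply (hF.of_le one_le_two)
  have hderiv := (hinv.differentiableAt one_ne_zero).hasFDerivAt.clm_apply
    (hF.differentiableAt two_ne_zero).hasFDerivAt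
  rw [hx, map_zero, add_zero, ← ContinuousLinearMap.mul_def,
    Ring.inverse_mul_cancel _ (hu ▸ u.isUnit)] at hderiv
  have hfd : fderiv ℝ (newtonDir F) x = ContinuousLinearMap.id ℝ E := hderiv.fderiv
  exact hfd ▸ hdir.hasStrictFDerivAt one_ne_zero

theorem hasStrictFDerivAt_dampedNewton {F : E → E} {x : E} (hF : ContDiffAt ℝ 2 F x)
    (hx : F x = 0) (hDF : IsUnit (fderiv ℝ F x)) (s : ℝ) :
    HasStrictFDerivAt (fun z => z - s • newtonDir F z)
      ((1 - s) • ContinuousLinearMap.id ℝ E) x := by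
  rw [sub_smul, one_smul]
  exact (hasStrictFDerivAt_id x).fun_sub ((hasStrictFDerivAt_newtonDir hF hx hDF).const_smul s)

end DampedNewton

section

variable {n m : ℕ}

theorem contDiff_Fvec {f : Emm n m → ℝ} {k : WithTop ℕ∞} (hf : ContDiff ℝ k (gradient f)) :
    ContDiff ℝ k (Fvec f) := by
  refine contDiff_piLp' 2 fun i => ?_
  rcases i with a | b
  · exact (EuclideanSpace.proj (Sum.inl a)).contDiff.comp hf
  · exact ((EuclideanSpace.proj (Sum.inr b)).contDiff.comp hf).neg

theorem IsLocalSaddle.gradient_eq_zero {f : Emm n m → ℝ} {zs : Emm n m}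
    (h : IsLocalSaddle f zs) (hf : DifferentiableAt ℝ f zs) : gradient f zs = 0 := by
  obtain ⟨U, hU, hsaddle⟩ := h
  ext i
  set e : Emm n m := EuclideanSpace.single i 1
  have hline : HasDerivAt (fun t : ℝ => f (zs + t • e)) (fderiv ℝ f zs e) 0 := by
    have := hf.hasFDerivAt.comp_hasDerivAt_of_eq (x := (0 : ℝ))
      (((hasDerivAt_id (0 : ℝ)).smul_const e).const_add zs) (by simp)
    simp only [one_smul, id] at this
    exact this
  have hnear : ∀ᶠ t in nhds (0 : ℝ), zs + t • e ∈ U :=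
    (Continuous.tendsto' (by fun_prop) 0 zs (by simp)) hU
  have hcrit : fderiv ℝ f zs e = 0 := by
    rcases i with a | b
    · refine IsLocalMin.hasDerivAt_eq_zero (hnear.mono fun t ht => ?_) hline
      have hsplice : splice (zs + t • e) zs = zs + t • e := by
        ext k; rcases k with k | k <;> simp [splice, toE, e]
      simpa [hsplice] using (hsaddle _ ht).2
    · refine IsLocalMax.hasDerivAt_eq_zero (hnear.mono fun t ht => ?_) hline
      have hsplice : splice zs (zs + t • e) = zs + t • e := by
        ext k; rcases k with k | k <;> simp [splice, toE, e]
      simpa [hsplice] using (hsaddle _ ht).1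
  rw [← InnerProductSpace.toDual_symm_apply, EuclideanSpace.inner_single_right] at hcrit
  simpa [gradient] using hcrit

theorem DFmat_eq_diagonal_mul_hessMat (f : Emm n m → ℝ) (z : Emm n m) :
    DFmat f z = diagonal (Sum.elim (fun _ => 1) fun _ => -1) * hessMat f z := by
  ext i j
  rw [diagonal_mul]
  rcases i with a | b
  · simp [DFmat, hessMat, Fvec, toE]
  · simp [DFmat, hessMat, Fvec, toE, fderiv_fun_neg]

theorem isUnit_DFmat {f : Emm n m → ℝ} {z : Emm n m} (h : IsUnit (hessMat f z)) :
    IsUnit (DFmat f z) := by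
  rw [DFmat_eq_diagonal_mul_hessMat]
  refine IsUnit.mul (isUnit_diagonal.2 (Pi.isUnit_iff.2 fun i => ?_)) h
  rcases i <;> simp

theorem toEuclideanCLM_DFmat {f : Emm n m → ℝ} {z : Emm n m}
    (hF : DifferentiableAt ℝ (Fvec f) z) :
    toEuclideanCLM (𝕜 := ℝ) (DFmat f z) = fderiv ℝ (Fvec f) z := by
  refine ContinuousLinearMap.coe_injective <|
    (EuclideanSpace.basisFun (Idx n m) ℝ).toBasis.ext fun j => ?_
  ext i
  have hi : HasFDerivAt (fun w => Fvec f w i) (PiLp.proj 2 _ i ∘L fderiv ℝ (Fvec f) z) z :=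
    (PiLp.hasFDerivAt_apply (𝕜 := ℝ) 2 (Fvec f z) i).comp z hF.hasFDerivAt
  simp [DFmat, hi.fderiv]

theorem newtonDir_Fvec {f : Emm n m → ℝ} {z : Emm n m}
    (hF : DifferentiableAt ℝ (Fvec f) z) :
    newtonDir (Fvec f) z = toE ((DFmat f z)⁻¹ *ᵥ ofE (Fvec f z)) := by
  rw [newtonDir, ← toEuclideanCLM_DFmat hF, ← MulEquiv.map_ringInverse,
    ← nonsing_inv_eq_ringInverse]
  rfl

theorem isLocExpStableFixed_of_hasStrictFDerivAt {w : Emm n m → Emm n m}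
    {A : Emm n m →L[ℝ] Emm n m} {ze : Emm n m} (hw : HasStrictFDerivAt w A ze)
    (hfix : w ze = ze) (hA : ‖A‖ < 1) : IsLocExpStableFixed w ze := by
  obtain ⟨γ, hAγ, hγ⟩ := exists_between (show ‖A‖₊ < 1 by exact_mod_cast hA)
  obtain ⟨δ, hδ, hiter⟩ := hw.exists_iterate_norm_sub_le hfix hAγ hγ.le
  refine ⟨hfix, δ, 1, γ, hδ, one_pos, NNReal.coe_pos.2 (pos_of_gt hAγ), hγ, fun z hz k => ?_⟩
  simpa using hiter z hz k

end

theorem stmt15_general {n m : ℕ} (f : Emm n m → ℝ) (L : ℝ)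
    (hf : ContDiff ℝ 3 f) (hB : AssumptionB f L)
    (zs : Emm n m) (hzs : IsLocalSaddle f zs) :
    ∃ sStar > (0:ℝ), ∀ s ∈ Set.Ioo (0:ℝ) sStar,
      IsLocExpStableFixed (fun z => z - s • toE ((DFmat f z)⁻¹ *ᵥ ofE (Fvec f z))) zs := by
  have hF : ContDiff ℝ 2 (Fvec f) := contDiff_Fvec (contDiff_gradient hf)
  have hFzs : Fvec f zs = 0 := by
    rw [Fvec, hzs.gradient_eq_zero (hf.differentiable (by norm_num) zs)]
    ext i; rcases i <;> simp [toE]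
  have hDF : IsUnit (fderiv ℝ (Fvec f) zs) :=
    toEuclideanCLM_DFmat (hF.differentiable two_ne_zero zs) ▸
      (isUnit_DFmat (hB.1 zs)).map toEuclideanCLM
  refine ⟨2, two_pos, fun s ⟨hs0, hs2⟩ => ?_⟩
  have hstep : (fun z => z - s • toE ((DFmat f z)⁻¹ *ᵥ ofE (Fvec f z))) =
      fun z => z - s • newtonDir (Fvec f) z := by
    funext z; rw [newtonDir_Fvec (hF.differentiable two_ne_zero z)]
  rw [hstep]
  refine isLocExpStableFixed_of_hasStrictFDerivAt
    (hasStrictFDerivAt_dampedNewton hF.contDiffAt hFzs hDF s) (by simp [newtonDir, hFzs]) ?_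
  calc ‖(1 - s) • ContinuousLinearMap.id ℝ (Emm n m)‖
      ≤ ‖1 - s‖ * ‖ContinuousLinearMap.id ℝ (Emm n m)‖ := ContinuousLinearMap.opNorm_smul_le _ _
    _ ≤ |1 - s| := mul_le_of_le_one_right (abs_nonneg _) ContinuousLinearMap.norm_id_le
    _ < 1 := abs_sub_lt_iff.2 ⟨by linarith, by linarith⟩

/-- For small enough step sizes, saddle points are locally exponentially stable fixed
points of the Damped Newton iteration. -/
theorem stmt15 {n m : ℕ} (f : Emm n m → ℝ) (L : ℝ)
    (hf : ContDiff ℝ 3 f) (hL : 0 < L) (hB : AssumptionB f L)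
    (zs : Emm n m) (hzs : IsLocalSaddle f zs) :
    ∃ sStar > (0:ℝ), ∀ s ∈ Set.Ioo (0:ℝ) sStar,
      IsLocExpStableFixed (fun z => z - s • toE ((DFmat f z)⁻¹ *ᵥ ofE (Fvec f z))) zs :=
  stmt15_general f L hf hB zs hzs
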